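/- Let G : ℝ^N → Mat(N,ℝ) be continuous, symmetric-valued, with α|η|² ≤ η·G(ξ)η ≤ β|η|² uniformly (0 < α ≤ β). If ξₙ ⇀ ξ weakly in H¹((0,T); ℝ^N), then E(ξ) ≤ liminf E(ξₙ), where E(ξ) = ∫₀ᵀ G(ξ(t))ξ'(t)·ξ'(t) dt. -/

import Mathlib

open scoped RealInnerProductSpace
open Set MeasureTheory intervalIntegral Filter

variable {N : ℕ}

/-- Membership in `H¹((0,T); ℝᴺ)`: absolutely continuous with
square-integrable derivative `ξ'`. -/
def MemH1 (T : ℝ) (ξ ξ' : ℝ → EuclideanSpace ℝ (Fin N)) : Prop :=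
  IntervalIntegrable ξ' volume 0 T ∧
  IntervalIntegrable (fun t => ‖ξ' t‖ ^ 2) volume 0 T ∧
  IntervalIntegrable (fun t => ‖ξ t‖ ^ 2) volume 0 T ∧
  (∀ t ∈ Icc 0 T, ξ t = ξ 0 + ∫ s in (0:ℝ)..t, ξ' s)

/-- Weak convergence `ξₙ ⇀ ξ` in `H¹((0,T); ℝᴺ)`, tested against arbitrary
`L²` pairs `(g, g')`. -/
def WeakH1Tendsto (T : ℝ) (ξseq ξseq' : ℕ → ℝ → EuclideanSpace ℝ (Fin N))
    (ξ ξ' : ℝ → EuclideanSpace ℝ (Fin N)) : Prop :=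
  ∀ g g' : ℝ → EuclideanSpace ℝ (Fin N),
    IntervalIntegrable (fun t => ‖g t‖ ^ 2) volume 0 T →
    IntervalIntegrable (fun t => ‖g' t‖ ^ 2) volume 0 T →
    Tendsto (fun n => ∫ t in (0:ℝ)..T, (⟪ξseq n t, g t⟫ + ⟪ξseq' n t, g' t⟫))
      atTop (nhds (∫ t in (0:ℝ)..T, (⟪ξ t, g t⟫ + ⟪ξ' t, g' t⟫)))

/-!
In one dimension weak `H¹` convergence forces pointwise convergence `ξₙ t → ξ t`: for each `v`,
`⟪ξ t, v⟫` is a continuous linear functional of the pair `(ξ, ξ')`, because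
`T • ξ 0 = ∫ ξ - ∫ (T - s) • ξ' s` and `ξ t = ξ 0 + ∫₀ᵗ ξ'`. So the coefficients `G (ξₙ t)` converge
pointwise to `G (ξ t)` and stay bounded by `β`. Expanding the coercive quadratic form around `ξ'`,
`⟪ξₙ', Aₙ ξₙ'⟫ ≥ ⟪ξ', Aₙ ξ'⟫ + 2 ⟪ξₙ' - ξ', A ξ'⟫ - α⁻¹ ‖(Aₙ - A) ξ'‖²` with `Aₙ = G ∘ ξₙ`,
`A = G ∘ ξ`; after integration the first and last terms converge by dominated convergence and the
middle one vanishes in the limit by weak convergence of `ξₙ'` in `L²`. Finally the energies of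
`ξₙ` are bounded above, since weakly convergent sequences are bounded (Banach–Steinhaus), so the
`liminf` is not a junk value.
-/

open scoped Topology

section InnerProductSpace

variable {E : Type*} [NormedAddCommGroup E] [InnerProductSpace ℝ E]

theorem ContinuousLinearMap.opNorm_le_of_inner_self_le {A : E →L[ℝ] E}
    (hA : A.IsSymmetric) {β : ℝ} (hβ : 0 ≤ β) (h₀ : ∀ η, 0 ≤ ⟪η, A η⟫)
    (h : ∀ η, ⟪η, A η⟫ ≤ β * ‖η‖ ^ 2) : ‖A‖ ≤ β := by
  rw [A.norm_eq_iSup_rayleighQuotient hA]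
  refine ciSup_le fun η => ?_
  rw [rayleighQuotient, reApplyInnerSelf_apply, RCLike.re_to_real, real_inner_comm,
    abs_of_nonneg (div_nonneg (h₀ η) (by positivity))]
  exact div_le_of_le_mul₀ (by positivity) hβ (h η)

theorem inner_map_self_lower_bound {α : ℝ} (hα : 0 < α) {A A₀ : E →L[ℝ] E}
    (hA : A.IsSymmetric) (hcoer : ∀ η, α * ‖η‖ ^ 2 ≤ ⟪η, A η⟫) (u x : E) :
    ⟪u, A u⟫ + 2 * ⟪x - u, A₀ u⟫ - α⁻¹ * ‖(A - A₀) u‖ ^ 2 ≤ ⟪x, A x⟫ := by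
  set d := x - u
  have hexpand : ⟪x, A x⟫ = ⟪u, A u⟫ + 2 * ⟪d, A u⟫ + ⟪d, A d⟫ := by
    have hsymm : ⟪u, A d⟫ = ⟪d, A u⟫ := by rw [real_inner_comm]; exact hA d u
    rw [show x = u + d by simp [d], map_add, inner_add_left, inner_add_right, inner_add_right,
      hsymm]
    ring
  have hsplit : ⟪d, A u⟫ = ⟪d, A₀ u⟫ + ⟪d, (A - A₀) u⟫ := by
    rw [sub_apply, inner_sub_right]; ring
  -- Young's inequality with weight `α`; the resulting `α‖d‖²` is absorbed by coercivity.
  have hyoung : -(α * ‖d‖ ^ 2) - α⁻¹ * ‖(A - A₀) u‖ ^ 2 ≤ 2 * ⟪d, (A - A₀) u⟫ := by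
    have hcs := neg_le_of_abs_le (abs_real_inner_le_norm d ((A - A₀) u))
    have hsq : 0 ≤ α⁻¹ * (α * ‖d‖ - ‖(A - A₀) u‖) ^ 2 := by positivity
    have : α⁻¹ * (α * ‖d‖ - ‖(A - A₀) u‖) ^ 2
        = α * ‖d‖ ^ 2 - 2 * (‖d‖ * ‖(A - A₀) u‖) + α⁻¹ * ‖(A - A₀) u‖ ^ 2 := by
      field_simp; ring
    linarith
  linarith [hcoer d]

theorem tendsto_of_forall_inner_tendsto [FiniteDimensional ℝ E] {ι : Type*} {l : Filter ι}
    {x : ι → E} {x₀ : E} (h : ∀ v, Tendsto (fun i => ⟪x i, v⟫) l (𝓝 ⟪x₀, v⟫)) :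
    Tendsto x l (𝓝 x₀) := by
  let b := stdOrthonormalBasis ℝ E
  rw [← b.sum_repr' x₀]
  refine Tendsto.congr (fun i => b.sum_repr' (x i)) (tendsto_finsetSum _ fun j _ => ?_)
  simp_rw [real_inner_comm _ (b j)]
  exact (h (b j)).smul_const _

end InnerProductSpace

section L2

variable {Ω : Type*} [MeasurableSpace Ω] {μ : Measure Ω}

theorem MeasureTheory.AEStronglyMeasurable.clm_apply {𝕜 F G : Type*} [NontriviallyNormedField 𝕜]
    [NormedAddCommGroup F] [NormedSpace 𝕜 F] [NormedAddCommGroup G] [NormedSpace 𝕜 G]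
    {A : Ω → F →L[𝕜] G} {u : Ω → F} (hA : AEStronglyMeasurable A μ)
    (hu : AEStronglyMeasurable u μ) : AEStronglyMeasurable (fun t => A t (u t)) μ :=
  isBoundedBilinearMap_apply.continuous.comp_aestronglyMeasurable₂ hA hu

theorem MeasureTheory.MemLp.clm_apply {𝕜 F G : Type*} [NontriviallyNormedField 𝕜]
    [NormedAddCommGroup F] [NormedSpace 𝕜 F] [NormedAddCommGroup G] [NormedSpace 𝕜 G]
    {A : Ω → F →L[𝕜] G} {u : Ω → F} {p : ENNReal} {β : ℝ} (hu : MemLp u p μ)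
    (hA_meas : AEStronglyMeasurable A μ) (hA_bdd : ∀ᵐ t ∂μ, ‖A t‖ ≤ β) :
    MemLp (fun t => A t (u t)) p μ :=
  hu.of_le_mul (hA_meas.clm_apply hu.1) <| by
    filter_upwards [hA_bdd] with t ht
    exact (A t).le_of_opNorm_le ht (u t)

variable {E : Type*} [NormedAddCommGroup E] [InnerProductSpace ℝ E]

theorem MeasureTheory.MemLp.integrable_inner {f g : Ω → E} (hf : MemLp f 2 μ)
    (hg : MemLp g 2 μ) : Integrable (fun t => ⟪f t, g t⟫) μ :=
  (L2.integrable_inner (hf.toLp f) (hg.toLp g)).congr <| by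
    filter_upwards [hf.coeFn_toLp, hg.coeFn_toLp] with t hft hgt
    rw [hft, hgt]

theorem integral_inner_apply_self_le {A : Ω → E →L[ℝ] E} {x : Ω → E} {β : ℝ}
    (hA_meas : AEStronglyMeasurable A μ) (hA_bdd : ∀ t, ‖A t‖ ≤ β) (hx : MemLp x 2 μ) :
    ∫ t, ⟪x t, A t (x t)⟫ ∂μ ≤ β * ∫ t, ‖x t‖ ^ 2 ∂μ := by
  rw [← MeasureTheory.integral_const_mul]
  refine integral_mono (hx.integrable_inner (hx.clm_apply hA_meas (.of_forall hA_bdd)))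
    ((hx.integrable_norm_pow two_ne_zero).const_mul β) fun t => ?_
  calc ⟪x t, A t (x t)⟫ ≤ ‖x t‖ * (β * ‖x t‖) :=
        (real_inner_le_norm _ _).trans (by gcongr; exact (A t).le_of_opNorm_le (hA_bdd t) _)
    _ = β * ‖x t‖ ^ 2 := by ring

theorem integral_inner_map_self_lower_bound {A A₀ : Ω → E →L[ℝ] E} {x u : Ω → E} {α β : ℝ}
    (hα : 0 < α) (hA_symm : ∀ t, (A t).IsSymmetric)
    (hA_coer : ∀ t η, α * ‖η‖ ^ 2 ≤ ⟪η, A t η⟫) (hA_meas : AEStronglyMeasurable A μ)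
    (hA₀_meas : AEStronglyMeasurable A₀ μ) (hA_bdd : ∀ t, ‖A t‖ ≤ β)
    (hA₀_bdd : ∀ᵐ t ∂μ, ‖A₀ t‖ ≤ β) (hx : MemLp x 2 μ) (hu : MemLp u 2 μ) :
    ∫ t, ⟪u t, A t (u t)⟫ ∂μ + 2 * ∫ t, ⟪x t - u t, A₀ t (u t)⟫ ∂μ
      - α⁻¹ * ∫ t, ‖(A t - A₀ t) (u t)‖ ^ 2 ∂μ ≤ ∫ t, ⟪x t, A t (x t)⟫ ∂μ := by
  have h₁ : Integrable (fun t => ⟪u t, A t (u t)⟫) μ :=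
    hu.integrable_inner (hu.clm_apply hA_meas (.of_forall hA_bdd))
  have h₂ : Integrable (fun t => 2 * ⟪x t - u t, A₀ t (u t)⟫) μ :=
    ((hx.sub hu).integrable_inner (hu.clm_apply hA₀_meas hA₀_bdd)).const_mul 2
  have h₃ : Integrable (fun t => α⁻¹ * ‖(A t - A₀ t) (u t)‖ ^ 2) μ := by
    have hbdd : ∀ᵐ t ∂μ, ‖A t - A₀ t‖ ≤ β + β := by
      filter_upwards [hA₀_bdd] with t ht using (norm_sub_le _ _).trans (add_le_add (hA_bdd t) ht)
    exact ((hu.clm_apply (hA_meas.sub hA₀_meas) hbdd).integrable_norm_pow two_ne_zero).const_mul _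
  have h₁₂ : Integrable (fun t => ⟪u t, A t (u t)⟫ + 2 * ⟪x t - u t, A₀ t (u t)⟫) μ := h₁.add h₂
  rw [← MeasureTheory.integral_const_mul, ← MeasureTheory.integral_const_mul,
    ← integral_add h₁ h₂, ← integral_sub h₁₂ h₃]
  exact integral_mono (h₁₂.sub h₃)
    (hx.integrable_inner (hx.clm_apply hA_meas (.of_forall hA_bdd)))
    fun t => inner_map_self_lower_bound hα (hA_symm t) (hA_coer t) (u t) (x t)

def TendstoWeakL2 (μ : Measure Ω) (x : ℕ → Ω → E) (u : Ω → E) : Prop :=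
  ∀ g : Ω → E, MemLp g 2 μ →
    Tendsto (fun n => ∫ t, ⟪x n t, g t⟫ ∂μ) atTop (𝓝 (∫ t, ⟪u t, g t⟫ ∂μ))

namespace TendstoWeakL2

variable {x : ℕ → Ω → E} {u : Ω → E}

theorem tendsto_integral_inner_sub (hxu : TendstoWeakL2 μ x u) (hx : ∀ n, MemLp (x n) 2 μ)
    (hu : MemLp u 2 μ) {g : Ω → E} (hg : MemLp g 2 μ) :
    Tendsto (fun n => ∫ t, ⟪x n t - u t, g t⟫ ∂μ) atTop (𝓝 0) := by
  have hlim := (hxu g hg).sub_const (∫ t, ⟪u t, g t⟫ ∂μ)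
  rw [sub_self] at hlim
  refine hlim.congr fun n => ?_
  simp_rw [inner_sub_left]
  exact (integral_sub ((hx n).integrable_inner hg) (hu.integrable_inner hg)).symm

theorem exists_integral_norm_sq_le [CompleteSpace E] (hxu : TendstoWeakL2 μ x u)
    (hx : ∀ n, MemLp (x n) 2 μ) : ∃ C, ∀ n, ∫ t, ‖x n t‖ ^ 2 ∂μ ≤ C := by
  have hinner : ∀ n (y : Lp E 2 μ), ⟪(hx n).toLp (x n), y⟫ = ∫ t, ⟪x n t, y t⟫ ∂μ := by
    intro n y
    rw [L2.inner_def]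
    refine integral_congr_ae ?_
    filter_upwards [(hx n).coeFn_toLp] with t ht
    rw [ht]
  obtain ⟨C, hC⟩ : ∃ C, ∀ n, ‖innerSL ℝ ((hx n).toLp (x n))‖ ≤ C := by
    refine banach_steinhaus fun y => ?_
    obtain ⟨C, hC⟩ := (hxu y (Lp.memLp y)).norm.bddAbove_range
    exact ⟨C, fun n => by rw [innerSL_apply_apply, hinner]; exact hC ⟨n, rfl⟩⟩
  refine ⟨C ^ 2, fun n => ?_⟩
  calc ∫ t, ‖x n t‖ ^ 2 ∂μ = ‖(hx n).toLp (x n)‖ ^ 2 := by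
        rw [← real_inner_self_eq_norm_sq, hinner]
        refine integral_congr_ae ?_
        filter_upwards [(hx n).coeFn_toLp] with t ht
        rw [ht, real_inner_self_eq_norm_sq]
    _ ≤ C ^ 2 := pow_le_pow_left₀ (norm_nonneg _) (by simpa using hC n) 2

theorem bddAbove_integral_inner_apply_self [CompleteSpace E] (hxu : TendstoWeakL2 μ x u)
    (hx : ∀ n, MemLp (x n) 2 μ) {A : ℕ → Ω → E →L[ℝ] E} {β : ℝ}
    (hA_meas : ∀ n, AEStronglyMeasurable (A n) μ) (hA_bdd : ∀ n t, ‖A n t‖ ≤ β) :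
    BddAbove (Set.range fun n => ∫ t, ⟪x n t, A n t (x n t)⟫ ∂μ) := by
  obtain ⟨C, hC⟩ := hxu.exists_integral_norm_sq_le hx
  refine ⟨|β| * C, Set.forall_mem_range.2 fun n => ?_⟩
  calc ∫ t, ⟪x n t, A n t (x n t)⟫ ∂μ ≤ β * ∫ t, ‖x n t‖ ^ 2 ∂μ :=
        integral_inner_apply_self_le (hA_meas n) (hA_bdd n) (hx n)
    _ ≤ |β| * ∫ t, ‖x n t‖ ^ 2 ∂μ :=
        mul_le_mul_of_nonneg_right (le_abs_self β) (integral_nonneg fun t => by positivity)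
    _ ≤ |β| * C := by gcongr; exact hC n

end TendstoWeakL2

variable {A : ℕ → Ω → E →L[ℝ] E} {A₀ : Ω → E →L[ℝ] E} {u : Ω → E} {β : ℝ}

theorem tendsto_integral_inner_apply_of_tendsto_ae (hA_meas : ∀ n, AEStronglyMeasurable (A n) μ)
    (hA_bdd : ∀ n t, ‖A n t‖ ≤ β) (hA_lim : ∀ᵐ t ∂μ, Tendsto (fun n => A n t) atTop (𝓝 (A₀ t)))
    (hu : MemLp u 2 μ) :
    Tendsto (fun n => ∫ t, ⟪u t, A n t (u t)⟫ ∂μ) atTop (𝓝 (∫ t, ⟪u t, A₀ t (u t)⟫ ∂μ)) := by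
  refine tendsto_integral_of_dominated_convergence (fun t => β * ‖u t‖ ^ 2)
    (fun n => hu.1.inner ((hA_meas n).clm_apply hu.1))
    ((hu.integrable_norm_pow two_ne_zero).const_mul β)
    (fun n => .of_forall fun t => ?_) ?_
  · calc ‖⟪u t, A n t (u t)⟫‖ ≤ ‖u t‖ * (β * ‖u t‖) :=
          (norm_inner_le_norm _ _).trans (by gcongr; exact (A n t).le_of_opNorm_le (hA_bdd n t) _)
      _ = β * ‖u t‖ ^ 2 := by ring
  · filter_upwards [hA_lim] with t ht
    exact tendsto_const_nhds.inner
      (((ContinuousLinearMap.apply ℝ E (u t)).continuous.tendsto _).comp ht)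

theorem tendsto_integral_norm_sub_apply_sq_of_tendsto_ae
    (hA_meas : ∀ n, AEStronglyMeasurable (A n) μ) (hA₀_meas : AEStronglyMeasurable A₀ μ)
    (hA_bdd : ∀ n t, ‖A n t‖ ≤ β) (hA₀_bdd : ∀ᵐ t ∂μ, ‖A₀ t‖ ≤ β)
    (hA_lim : ∀ᵐ t ∂μ, Tendsto (fun n => A n t) atTop (𝓝 (A₀ t))) (hu : MemLp u 2 μ) :
    Tendsto (fun n => ∫ t, ‖(A n t - A₀ t) (u t)‖ ^ 2 ∂μ) atTop (𝓝 0) := by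
  have hlim := tendsto_integral_of_dominated_convergence (μ := μ)
    (F := fun n t => ‖(A n t - A₀ t) (u t)‖ ^ 2) (f := fun _ => 0)
    (fun t => (2 * β) ^ 2 * ‖u t‖ ^ 2)
    (fun n => (((hA_meas n).sub hA₀_meas).clm_apply hu.1).norm.pow 2)
    ((hu.integrable_norm_pow two_ne_zero).const_mul _) (fun n => ?_) ?_
  · simpa using hlim
  · filter_upwards [hA₀_bdd] with t ht
    have : ‖(A n t - A₀ t) (u t)‖ ≤ 2 * β * ‖u t‖ :=
      (A n t - A₀ t).le_of_opNorm_le (by linarith [norm_sub_le (A n t) (A₀ t), hA_bdd n t]) _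
    rw [Real.norm_of_nonneg (by positivity)]
    nlinarith [norm_nonneg ((A n t - A₀ t) (u t))]
  · filter_upwards [hA_lim] with t ht
    have : Tendsto (fun n => A n t - A₀ t) atTop (𝓝 0) := by
      simpa using ht.sub_const (A₀ t)
    simpa using (((ContinuousLinearMap.apply ℝ E (u t)).continuous.tendsto _).comp this).norm.pow 2

theorem integral_inner_apply_le_liminf [CompleteSpace E] {x : ℕ → Ω → E} {α : ℝ} (hα : 0 < α)
    (hA_symm : ∀ n t, (A n t).IsSymmetric) (hA_coer : ∀ n t η, α * ‖η‖ ^ 2 ≤ ⟪η, A n t η⟫)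
    (hA_meas : ∀ n, AEStronglyMeasurable (A n) μ) (hA_bdd : ∀ n t, ‖A n t‖ ≤ β)
    (hA_lim : ∀ᵐ t ∂μ, Tendsto (fun n => A n t) atTop (𝓝 (A₀ t)))
    (hx : ∀ n, MemLp (x n) 2 μ) (hu : MemLp u 2 μ) (hxu : TendstoWeakL2 μ x u) :
    ∫ t, ⟪u t, A₀ t (u t)⟫ ∂μ ≤ liminf (fun n => ∫ t, ⟪x n t, A n t (x n t)⟫ ∂μ) atTop := by
  have hA₀_meas : AEStronglyMeasurable A₀ μ := aestronglyMeasurable_of_tendsto_ae _ hA_meas hA_lim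
  have hA₀_bdd : ∀ᵐ t ∂μ, ‖A₀ t‖ ≤ β := by
    filter_upwards [hA_lim] with t ht
    exact le_of_tendsto' ht.norm (hA_bdd · t)
  set lower : ℕ → ℝ := fun n => ∫ t, ⟪u t, A n t (u t)⟫ ∂μ
    + 2 * ∫ t, ⟪x n t - u t, A₀ t (u t)⟫ ∂μ - α⁻¹ * ∫ t, ‖(A n t - A₀ t) (u t)‖ ^ 2 ∂μ
  have hlower_le : ∀ n, lower n ≤ ∫ t, ⟪x n t, A n t (x n t)⟫ ∂μ := fun n =>
    integral_inner_map_self_lower_bound hα (hA_symm n) (hA_coer n) (hA_meas n) hA₀_meas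
      (hA_bdd n) hA₀_bdd (hx n) hu
  have hlower_lim : Tendsto lower atTop (𝓝 (∫ t, ⟪u t, A₀ t (u t)⟫ ∂μ)) := by
    have hlim := ((tendsto_integral_inner_apply_of_tendsto_ae hA_meas hA_bdd hA_lim hu).add
      ((hxu.tendsto_integral_inner_sub hx hu (hu.clm_apply hA₀_meas hA₀_bdd)).const_mul 2)).sub
      ((tendsto_integral_norm_sub_apply_sq_of_tendsto_ae hA_meas hA₀_meas hA_bdd hA₀_bdd hA_lim
        hu).const_mul α⁻¹)
    rwa [mul_zero, mul_zero, add_zero, sub_zero] at hlim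
  have hbdd := hxu.bddAbove_integral_inner_apply_self hx hA_meas hA_bdd
  calc ∫ t, ⟪u t, A₀ t (u t)⟫ ∂μ = liminf lower atTop := hlower_lim.liminf_eq.symm
    _ ≤ _ := liminf_le_liminf (.of_forall hlower_le) hlower_lim.isBoundedUnder_ge
        hbdd.isBoundedUnder_of_range.isCoboundedUnder_ge

end L2

section PrimitiveIdentities

theorem intervalIntegral.integral_primitive_eq {h : ℝ → ℝ} {a b : ℝ}
    (hh : IntervalIntegrable h volume a b) :
    ∫ s in a..b, (∫ r in a..s, h r) = ∫ r in a..b, (b - r) * h r := by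
  have hF := hh.absolutelyContinuousOnInterval_intervalIntegral (c := a) left_mem_uIcc
  have hg : AbsolutelyContinuousOnInterval (fun s => s - b) a b :=
    (contDiff_id.sub contDiff_const).contDiffOn.absolutelyContinuousOnInterval
  have hderiv : ∀ᵐ r, r ∈ uIoc a b →
      deriv (fun s => ∫ r in a..s, h r) r * (r - b) = -((b - r) * h r) := by
    filter_upwards [hh.ae_hasDerivAt_integral] with r hr hrab
    rw [(hr (uIoc_subset_uIcc hrab) a left_mem_uIcc).deriv]
    ring
  simpa only [deriv_sub_const, deriv_id'', mul_one, integral_same, sub_self, mul_zero, zero_mul,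
    zero_sub, integral_congr_ae hderiv, intervalIntegral.integral_neg, neg_neg]
    using hF.integral_mul_deriv_eq_deriv_mul hg

theorem intervalIntegral.integral_eq_mul_add_integral_of_eq_add_primitive {f h : ℝ → ℝ}
    {a b : ℝ} (hh : IntervalIntegrable h volume a b)
    (hf : ∀ s ∈ uIcc a b, f s = f a + ∫ r in a..s, h r) :
    ∫ s in a..b, f s = (b - a) * f a + ∫ s in a..b, (b - s) * h s := by
  have hF : IntervalIntegrable (fun s => ∫ r in a..s, h r) volume a b :=
    (continuousOn_primitive_interval' hh left_mem_uIcc).intervalIntegrable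
  rw [integral_congr hf, integral_add intervalIntegrable_const hF, integral_const, smul_eq_mul,
    integral_primitive_eq hh]

theorem intervalIntegral.integral_inner_const {E : Type*} [NormedAddCommGroup E]
    [InnerProductSpace ℝ E] [CompleteSpace E] {f : ℝ → E} {a b : ℝ}
    (hf : IntervalIntegrable f volume a b) (v : E) :
    ∫ s in a..b, ⟪f s, v⟫ = ⟪∫ s in a..b, f s, v⟫ := by
  simpa only [innerSL_apply_apply, real_inner_comm v]
    using (innerSL ℝ v).intervalIntegral_comp_comm hf

end PrimitiveIdentities

namespace MemH1

variable {T : ℝ} {ξ ξ' : ℝ → EuclideanSpace ℝ (Fin N)}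

theorem continuousOn (hT : 0 ≤ T) (hξ : MemH1 T ξ ξ') : ContinuousOn ξ (Icc 0 T) := by
  have hprim := continuousOn_primitive_interval' hξ.1 left_mem_uIcc
  rw [uIcc_of_le hT] at hprim
  exact (continuousOn_const.add hprim).congr hξ.2.2.2

theorem aestronglyMeasurable (hT : 0 ≤ T) (hξ : MemH1 T ξ ξ') :
    AEStronglyMeasurable ξ (volume.restrict (Ioc 0 T)) :=
  ((hξ.continuousOn hT).mono Ioc_subset_Icc_self).aestronglyMeasurable measurableSet_Ioc

theorem memLp_deriv (hT : 0 ≤ T) (hξ : MemH1 T ξ ξ') :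
    MemLp ξ' 2 (volume.restrict (Ioc 0 T)) :=
  (memLp_two_iff_integrable_sq_norm ((intervalIntegrable_iff_integrableOn_Ioc_of_le hT).1
    hξ.1).aestronglyMeasurable).2 ((intervalIntegrable_iff_integrableOn_Ioc_of_le hT).1 hξ.2.1)

theorem inner_apply_eq (hT : 0 < T) (hξ : MemH1 T ξ ξ') {t : ℝ} (ht : t ∈ Icc 0 T)
    (v : EuclideanSpace ℝ (Fin N)) :
    ⟪ξ t, v⟫ = T⁻¹ * ((∫ s in 0..T, ⟪ξ s, v⟫) - ∫ s in 0..T, ⟪ξ' s, (T - s) • v⟫)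
      + ∫ s in 0..T, ⟪ξ' s, {s | s ≤ t}.indicator (fun _ => v) s⟫ := by
  have hinner : ∀ s ∈ Icc 0 T, ⟪ξ s, v⟫ = ⟪ξ 0, v⟫ + ∫ r in 0..s, ⟪ξ' r, v⟫ := by
    intro s hs
    have hint : IntervalIntegrable ξ' volume 0 s :=
      hξ.1.mono_set (by rw [uIcc_of_le hs.1, uIcc_of_le hT.le]; exact Icc_subset_Icc le_rfl hs.2)
    rw [hξ.2.2.2 s hs, inner_add_left, integral_inner_const hint]
  have hh : IntervalIntegrable (fun s => ⟪ξ' s, v⟫) volume 0 T :=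
    ⟨hξ.1.1.inner_const v, hξ.1.2.inner_const v⟩
  have hmean := integral_eq_mul_add_integral_of_eq_add_primitive hh (by rwa [uIcc_of_le hT.le])
  have hweight : ∫ s in 0..T, ⟪ξ' s, (T - s) • v⟫ = ∫ s in 0..T, (T - s) * ⟪ξ' s, v⟫ := by
    simp only [inner_smul_right]
  have hind : ∫ s in 0..T, ⟪ξ' s, {s | s ≤ t}.indicator (fun _ => v) s⟫
      = ∫ s in 0..t, ⟪ξ' s, v⟫ := by
    rw [← intervalIntegral.integral_indicator ht]
    refine integral_congr fun s _ => ?_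
    by_cases hs : s ≤ t <;> simp [hs]
  rw [hmean, hweight, hind, hinner t ht]
  field_simp
  ring

end MemH1

namespace WeakH1Tendsto

variable {T : ℝ} {ξseq ξseq' : ℕ → ℝ → EuclideanSpace ℝ (Fin N)}
  {ξ ξ' : ℝ → EuclideanSpace ℝ (Fin N)}

theorem tendsto_integral_inner (h : WeakH1Tendsto T ξseq ξseq' ξ ξ')
    {g : ℝ → EuclideanSpace ℝ (Fin N)} (hg : IntervalIntegrable (fun t => ‖g t‖ ^ 2) volume 0 T) :
    Tendsto (fun n => ∫ t in 0..T, ⟪ξseq n t, g t⟫) atTop (𝓝 (∫ t in 0..T, ⟪ξ t, g t⟫)) := by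
  simpa using h g 0 hg (by simp)

theorem tendsto_integral_inner_deriv (h : WeakH1Tendsto T ξseq ξseq' ξ ξ')
    {g : ℝ → EuclideanSpace ℝ (Fin N)} (hg : IntervalIntegrable (fun t => ‖g t‖ ^ 2) volume 0 T) :
    Tendsto (fun n => ∫ t in 0..T, ⟪ξseq' n t, g t⟫) atTop (𝓝 (∫ t in 0..T, ⟪ξ' t, g t⟫)) := by
  simpa using h 0 g (by simp) hg

theorem tendsto_apply (hT : 0 < T) (h : WeakH1Tendsto T ξseq ξseq' ξ ξ')
    (hseq : ∀ n, MemH1 T (ξseq n) (ξseq' n)) (hlim : MemH1 T ξ ξ') {t : ℝ} (ht : t ∈ Icc 0 T) :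
    Tendsto (fun n => ξseq n t) atTop (𝓝 (ξ t)) := by
  refine tendsto_of_forall_inner_tendsto fun v => ?_
  simp only [(hseq _).inner_apply_eq hT ht v, hlim.inner_apply_eq hT ht v]
  have hweight : IntervalIntegrable (fun s => ‖(T - s) • v‖ ^ 2) volume 0 T :=
    (by fun_prop : Continuous fun s : ℝ => ‖(T - s) • v‖ ^ 2).intervalIntegrable _ _
  have hind : IntervalIntegrable (fun s => ‖{s | s ≤ t}.indicator (fun _ => v) s‖ ^ 2)
      volume 0 T := by
    have hm : MeasurableSet {s : ℝ | s ≤ t} := measurableSet_Iic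
    have h : IntervalIntegrable ({s : ℝ | s ≤ t}.indicator fun _ => ‖v‖ ^ 2) volume 0 T :=
      ⟨intervalIntegrable_const.1.indicator hm, intervalIntegrable_const.2.indicator hm⟩
    refine h.congr fun s _ => ?_
    by_cases hs : s ≤ t <;> simp [hs]
  exact (((h.tendsto_integral_inner intervalIntegrable_const).sub
    (h.tendsto_integral_inner_deriv hweight)).const_mul _).add (h.tendsto_integral_inner_deriv hind)

theorem tendstoWeakL2_deriv (hT : 0 ≤ T) (h : WeakH1Tendsto T ξseq ξseq' ξ ξ') :
    TendstoWeakL2 (volume.restrict (Ioc 0 T)) ξseq' ξ' := fun g hg => by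
  have hg2 : IntervalIntegrable (fun t => ‖g t‖ ^ 2) volume 0 T :=
    (intervalIntegrable_iff_integrableOn_Ioc_of_le hT).2 (hg.integrable_norm_pow two_ne_zero)
  simpa only [integral_of_le hT] using h.tendsto_integral_inner_deriv hg2

end WeakH1Tendsto

/-- Weak lower semicontinuity of the dissipated-energy functional
`E(ξ) = ∫₀ᵀ G(ξ)ξ'·ξ' dt` along weakly `H¹`-convergent sequences. -/
theorem energy_weak_lsc (T : ℝ) (hT : 0 < T)
    (G : EuclideanSpace ℝ (Fin N) → EuclideanSpace ℝ (Fin N) →L[ℝ] EuclideanSpace ℝ (Fin N))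
    (hGcont : Continuous G)
    (hGsymm : ∀ ξ η ζ, ⟪G ξ η, ζ⟫ = ⟪η, G ξ ζ⟫)
    (α β : ℝ) (hα : 0 < α) (hαβ : α ≤ β)
    (hcoer : ∀ ξ η, α * ‖η‖ ^ 2 ≤ ⟪η, G ξ η⟫)
    (hbdd : ∀ ξ η, ⟪η, G ξ η⟫ ≤ β * ‖η‖ ^ 2)
    (ξseq ξseq' : ℕ → ℝ → EuclideanSpace ℝ (Fin N))
    (ξ ξ' : ℝ → EuclideanSpace ℝ (Fin N))
    (hseq : ∀ n, MemH1 T (ξseq n) (ξseq' n)) (hlim : MemH1 T ξ ξ')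
    (hweak : WeakH1Tendsto T ξseq ξseq' ξ ξ') :
    (∫ t in (0:ℝ)..T, ⟪ξ' t, G (ξ t) (ξ' t)⟫) ≤
      liminf (fun n => ∫ t in (0:ℝ)..T, ⟪ξseq' n t, G (ξseq n t) (ξseq' n t)⟫)
        atTop := by
  have hGnorm : ∀ z, ‖G z‖ ≤ β := fun z =>
    (G z).opNorm_le_of_inner_self_le (hGsymm z) (hα.le.trans hαβ)
      (fun η => (by positivity : 0 ≤ α * ‖η‖ ^ 2).trans (hcoer z η)) (hbdd z)
  have hGlim : ∀ᵐ t ∂volume.restrict (Ioc 0 T),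
      Tendsto (fun n => G (ξseq n t)) atTop (𝓝 (G (ξ t))) := by
    filter_upwards [ae_restrict_mem measurableSet_Ioc] with t ht
    exact (hGcont.tendsto _).comp (hweak.tendsto_apply hT hseq hlim (Ioc_subset_Icc_self ht))
  have hlsc := integral_inner_apply_le_liminf hα (fun n t => hGsymm (ξseq n t))
    (fun n t => hcoer _) (fun n => hGcont.comp_aestronglyMeasurable
      ((hseq n).aestronglyMeasurable hT.le)) (fun n t => hGnorm _) hGlim
    (fun n => (hseq n).memLp_deriv hT.le) (hlim.memLp_deriv hT.le) (hweak.tendstoWeakL2_deriv hT.le)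
  simpa only [integral_of_le hT.le] using hlsc
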